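/- arXiv:1107.4781 — 4 statements merged into one kernel-verified Lean document; each statement's English description precedes it below -/
import Mathlib

section
/- Let ⊲ be a binary relation on ordinals such that ν ⊲ τ implies ν < τ. Define ν ⊴ τ iff ν ⊲ τ or ν = τ, and define ν ⊑ τ iff ν ⊴ τ or ν is a limit point of {δ : δ ⊲ τ}. Assume ⊑ is tree-like: whenever δ₁ ⊑ τ and δ₂ ⊑ τ, then δ₁ ⊑ δ₂ or δ₂ ⊑ δ₁. Let ν be an ordinal for which there exists a largest ordinal μ_ν with ν ⊴ μ_ν, and assume ν is not a limit point of the set {δ : δ ⊑ ν and δ ≠ ν}. Then μ_ν is the largest ordinal μ with ν ⊑ μ; that is, ν ⊑ μ_ν and every ordinal μ with ν ⊑ μ satisfies μ ≤ μ_ν. -/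
/-- `l` is a limit point of the set `A` of ordinals: `l > 0` and `sup (A ∩ l) = l`. -/
def IsLimitPt (A : Set Ordinal) (l : Ordinal) : Prop :=
  0 < l ∧ sSup (A ∩ Set.Iio l) = l

/-- `ν ⊴ τ` iff `ν ⊲ τ` or `ν = τ`. -/
def tLE (lt : Ordinal → Ordinal → Prop) (ν τ : Ordinal) : Prop :=
  lt ν τ ∨ ν = τ

/-- `ν ⊑ τ` iff `ν ⊴ τ` or `ν` is a limit point of `{δ : δ ⊲ τ}`. -/
def tSQ (lt : Ordinal → Ordinal → Prop) (ν τ : Ordinal) : Prop :=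
  tLE lt ν τ ∨ IsLimitPt {δ | lt δ τ} ν

/-- If `ν ⊑ δ` (given `lt` implies `<`), then `ν ≤ δ`. -/
lemma tSQ_le (lt : Ordinal → Ordinal → Prop) (hlt : ∀ ν τ, lt ν τ → ν < τ)
    (ν δ : Ordinal) (h : tSQ lt ν δ) : ν ≤ δ := by
  rcases h with (h | h) | ⟨_, hsup⟩
  · exact (hlt _ _ h).le
  · exact h.le
  · rw [← hsup]
    exact csSup_le' (fun x hx => (hlt _ _ hx.1).le)

theorem stmt0 (lt : Ordinal → Ordinal → Prop)
    (hlt : ∀ ν τ, lt ν τ → ν < τ)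
    (htree : ∀ δ₁ δ₂ τ, tSQ lt δ₁ τ → tSQ lt δ₂ τ → tSQ lt δ₁ δ₂ ∨ tSQ lt δ₂ δ₁)
    (ν μν : Ordinal)
    (hle : tLE lt ν μν)
    (hmax : ∀ μ, tLE lt ν μ → μ ≤ μν)
    (hsucc : ¬ IsLimitPt {δ | tSQ lt δ ν ∧ δ ≠ ν} ν) :
    tSQ lt ν μν ∧ ∀ μ, tSQ lt ν μ → μ ≤ μν := by
  refine ⟨Or.inl hle, fun μ hμ => ?_⟩
  rcases hμ with h | ⟨hν0, hsup⟩
  · exact hmax μ h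
  · -- ν is a limit point of {δ | lt δ μ}; derive a contradiction with hsucc
    exfalso
    apply hsucc
    refine ⟨hν0, le_antisymm (csSup_le' (fun x hx => hx.2.le)) ?_⟩
    have key : sSup ({δ | lt δ μ} ∩ Set.Iio ν) ≤
        sSup ({δ | tSQ lt δ ν ∧ δ ≠ ν} ∩ Set.Iio ν) := by
      refine csSup_le_csSup ⟨ν, fun x hx => hx.2.le⟩ ?_ ?_
      · -- nonempty of {δ | lt δ μ} ∩ Iio ν
        by_contra hne
        rw [Set.not_nonempty_iff_eq_empty] at hne
        rw [hne, csSup_empty] at hsup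
        exact hν0.ne' hsup.symm
      · rintro x ⟨hxμ, hxν⟩
        refine ⟨⟨?_, hxν.ne⟩, hxν⟩
        -- x ⊑ μ and ν ⊑ μ, so x ⊑ ν or ν ⊑ x; the latter contradicts x < ν
        have hxsq : tSQ lt x μ := Or.inl (Or.inl hxμ)
        have hνsq : tSQ lt ν μ := Or.inr ⟨hν0, hsup⟩
        rcases htree x ν μ hxsq hνsq with h | h
        · exact h
        · exact absurd (tSQ_le lt hlt ν x h) (not_le.mpr hxν)
    exact hsup.symm.trans_le key
end

section
/- Let ⊑ be a binary relation on ordinals such that δ ⊑ τ implies δ ≤ τ, and let μ be a function from ordinals to ordinals such that ν ≤ μ(ν) for every ordinal ν, and such that δ ⊑ τ implies μ(τ) ≤ μ(δ). Call an ordinal δ a root if the only ordinal δ' with δ' ⊑ δ is δ itself. Assume the root separation property: for all roots δ₁, δ₂ with δ₁ < δ₂ one has μ(δ₁) < δ₂. Let ν̄ and τ̄ be ordinals, let δ_ν̄ be a root with δ_ν̄ ⊑ ν̄ and let δ_τ̄ be a root with δ_τ̄ ⊑ τ̄. If μ(τ̄) < ν̄ and it is not the case that δ_τ̄ ⊑ ν̄,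 then μ(τ̄) < δ_ν̄. -/
/-- `δ` is a root of the relation `sq`: the only `δ'` with `δ' ⊑ δ` is `δ` itself. -/
def IsRoot (sq : Ordinal → Ordinal → Prop) (δ : Ordinal) : Prop :=
  ∀ δ', sq δ' δ → δ' = δ

theorem stmt1 (sq : Ordinal → Ordinal → Prop)
    (hle : ∀ δ τ, sq δ τ → δ ≤ τ)
    (μ : Ordinal → Ordinal)
    (hμ : ∀ ν, ν ≤ μ ν)
    (hmono : ∀ δ τ, sq δ τ → μ τ ≤ μ δ)
    (hsep : ∀ δ₁ δ₂, IsRoot sq δ₁ → IsRoot sq δ₂ → δ₁ < δ₂ → μ δ₁ < δ₂)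
    (νb τb δν δτ : Ordinal)
    (hδν : IsRoot sq δν) (hδνsq : sq δν νb)
    (hδτ : IsRoot sq δτ) (hδτsq : sq δτ τb)
    (h1 : μ τb < νb) (h2 : ¬ sq δτ νb) :
    μ τb < δν := by
  rcases lt_trichotomy δτ δν with h | h | h
  · exact lt_of_le_of_lt (hmono _ _ hδτsq) (hsep _ _ hδτ hδν h)
  · exact absurd (h ▸ hδνsq) h2
  · have : μ δν < μ δν :=
      (((hsep _ _ hδν hδτ h).trans_le ((hle _ _ hδτsq).trans (hμ τb))).trans h1).trans_le
        ((hμ νb).trans (hmono _ _ hδνsq))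
    exact absurd this (lt_irrefl _)
end

section
/- Let μ̄ and μ be ordinals and let f be a strictly increasing function from the ordinals < μ̄ to the ordinals < μ which is cofinal (sup{f(ȳ) : ȳ < μ̄} = μ) and satisfies f(0) = 0. Let Λ̄ ⊆ μ̄ and Λ ⊆ μ be sets of ordinals such that: (i) for every ȳ < μ̄, ȳ ∈ Λ̄ if and only if f(ȳ) ∈ Λ; (ii) for all z̄ < ȳ < μ̄, there exists x̄ ∈ Λ̄ with z̄ < x̄ < ȳ if and only if there exists x ∈ Λ with f(z̄) < x < f(ȳ). Assume moreover that Λ̄ is closed in μ̄. Then Λ̄ has a maximum element if and only if Λ has a maximum element, and in that case f(max Λ̄) = max Λ. -/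
/-- `A` is closed in the ordinal `ν`: every limit point of `A` below `ν` belongs to `A`. -/
def IsClosedIn (A : Set Ordinal) (ν : Ordinal) : Prop :=
  ∀ l < ν, IsLimitPt A l → l ∈ A

/-!
Since `f` is cofinal, every `x ∈ Λ` lies below some `f y` with `y < μ̄`. If `m = max Λ̄` and some
`x ∈ Λ` exceeded `f m`, condition (ii) would pull `x` back to an element of `Λ̄` above `m`. Conversely,
if `m' = max Λ`, pick `y < μ̄` with `m' < f y`: by (i) and monotonicity `Λ̄ ⊆ [0, y)`, and by (i), (ii)
applied between `f 0 = 0` and `f y` the set `Λ̄` is nonempty. A nonempty set bounded strictly below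
`μ̄` has its supremum below `μ̄`; this supremum is either attained or a limit point of `Λ̄`, and
closedness rules out the latter.
-/

theorem IsClosedIn.exists_isGreatest {A : Set Ordinal} {ν y : Ordinal} (hA : IsClosedIn A ν)
    (hne : A.Nonempty) (hy : y < ν) (hAy : A ⊆ Set.Iic y) : ∃ m, IsGreatest A m := by
  have hbdd : BddAbove A := ⟨y, hAy⟩
  refine ⟨sSup A, ?_, fun a ha => le_csSup hbdd ha⟩
  by_contra hnot
  have hlt : A ⊆ Set.Iio (sSup A) := fun a ha =>
    (le_csSup hbdd ha).lt_of_ne (by rintro rfl; exact hnot ha)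
  obtain ⟨a, ha⟩ := hne
  have hlimit : IsLimitPt A (sSup A) :=
    ⟨(zero_le : 0 ≤ a).trans_lt (hlt ha), by rw [Set.inter_eq_left.2 hlt]⟩
  exact hnot (hA _ ((csSup_le' hAy).trans_lt hy) hlimit)

section Transfer

variable {α β : Type*} [LinearOrder α] [LinearOrder β] {f : α → β} {μb : α}
  {Λb : Set α} {Λ : Set β}

theorem isGreatest_apply_of_isGreatest (hf : StrictMonoOn f (Set.Iio μb))
    (hΛb : Λb ⊆ Set.Iio μb) (hcof : ∀ x ∈ Λ, ∃ y < μb, x < f y)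
    (hi : ∀ y < μb, y ∈ Λb → f y ∈ Λ)
    (hii : ∀ z y, z < y → y < μb → (∃ x ∈ Λ, f z < x ∧ x < f y) → ∃ x ∈ Λb, z < x ∧ x < y)
    {m : α} (hm : IsGreatest Λb m) : IsGreatest Λ (f m) := by
  refine ⟨hi m (hΛb hm.1) hm.1, fun x hx => not_lt.1 fun hmx => ?_⟩
  obtain ⟨y, hy, hxy⟩ := hcof x hx
  have hmy : m < y := (hf.lt_iff_lt (hΛb hm.1) hy).1 (hmx.trans hxy)
  obtain ⟨xb, hxb, hmxb, -⟩ := hii m y hmy hy ⟨x, hx, hmx, hxy⟩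
  exact (hm.2 hxb).not_gt hmxb

theorem subset_Iio_of_mem_upperBounds_of_lt_apply (hf : StrictMonoOn f (Set.Iio μb))
    (hΛb : Λb ⊆ Set.Iio μb) (hi : ∀ y < μb, y ∈ Λb → f y ∈ Λ) {m' : β} (hm' : m' ∈ upperBounds Λ)
    {y : α} (hy : y < μb) (hm'y : m' < f y) : Λb ⊆ Set.Iio y := fun x hx =>
  lt_of_not_ge fun hyx =>
    (hm'y.trans_le ((hf.le_iff_le hy (hΛb hx)).2 hyx)).not_ge (hm' (hi x (hΛb hx) hx))

theorem inter_Ico_nonempty_of_mem_of_apply_le_of_lt (hi : ∀ y < μb, f y ∈ Λ → y ∈ Λb)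
    (hii : ∀ z y, z < y → y < μb → (∃ x ∈ Λ, f z < x ∧ x < f y) → ∃ x ∈ Λb, z < x ∧ x < y)
    {z y : α} {x : β} (hzy : z < y) (hy : y < μb) (hx : x ∈ Λ) (hzx : f z ≤ x) (hxy : x < f y) :
    (Λb ∩ Set.Ico z y).Nonempty := by
  obtain rfl | hzx := hzx.eq_or_lt
  · exact ⟨z, hi z (hzy.trans hy) hx, le_rfl, hzy⟩
  · obtain ⟨xb, hxb, hzxb, hxby⟩ := hii z y hzy hy ⟨x, hx, hzx, hxy⟩
    exact ⟨xb, hxb, hzxb.le, hxby⟩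

end Transfer

theorem stmt3_general (μb μ : Ordinal) (f : Ordinal → Ordinal)
    (hmono : ∀ x y, x < y → y < μb → f x < f y)
    (hcof : sSup (f '' Set.Iio μb) = μ)
    (hf0 : f 0 = 0)
    (Λb Λ : Set Ordinal)
    (hΛb : Λb ⊆ Set.Iio μb) (hΛ : Λ ⊆ Set.Iio μ)
    (hi : ∀ y < μb, (y ∈ Λb ↔ f y ∈ Λ))
    (hii : ∀ z y, z < y → y < μb →
      ((∃ x ∈ Λb, z < x ∧ x < y) ↔ (∃ x ∈ Λ, f z < x ∧ x < f y)))
    (hclosed : IsClosedIn Λb μb) :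
    ((∃ m, IsGreatest Λb m) ↔ (∃ m, IsGreatest Λ m)) ∧
      ∀ m m', IsGreatest Λb m → IsGreatest Λ m' → f m = m' := by
  have hf : StrictMonoOn f (Set.Iio μb) := fun x _ y hy hxy => hmono x y hxy hy
  have hcof' : ∀ x ∈ Λ, ∃ y < μb, x < f y := fun x hx => by
    obtain ⟨_, ⟨y, hy, rfl⟩, hxy⟩ := exists_lt_of_lt_csSup' (hcof ▸ hΛ hx : x < sSup _)
    exact ⟨y, hy, hxy⟩
  have hfwd : ∀ m, IsGreatest Λb m → IsGreatest Λ (f m) := fun m =>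
    isGreatest_apply_of_isGreatest hf hΛb hcof' (fun y hy => (hi y hy).1)
      (fun z y hzy hy => (hii z y hzy hy).2)
  refine ⟨⟨fun ⟨m, hm⟩ => ⟨f m, hfwd m hm⟩, fun ⟨m', hm'⟩ => ?_⟩,
    fun m m' hm hm' => (hfwd m hm).unique hm'⟩
  obtain ⟨y, hy, hm'y⟩ := hcof' m' hm'.1
  have hy0 : 0 < y := pos_iff_ne_zero.2 <| by
    rintro rfl
    exact (zero_le : 0 ≤ m').not_gt (hf0 ▸ hm'y)
  have hne : Λb.Nonempty :=
    (inter_Ico_nonempty_of_mem_of_apply_le_of_lt (fun y hy => (hi y hy).2)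
      (fun z y hzy hy => (hii z y hzy hy).2) hy0 hy hm'.1 (hf0 ▸ zero_le) hm'y).mono
      Set.inter_subset_left
  exact hclosed.exists_isGreatest hne hy <| (subset_Iio_of_mem_upperBounds_of_lt_apply hf hΛb
    (fun y hy => (hi y hy).1) hm'.2 hy hm'y).trans Set.Iio_subset_Iic_self

theorem stmt3 (μb μ : Ordinal) (f : Ordinal → Ordinal)
    (hmono : ∀ x y, x < y → y < μb → f x < f y)
    (hinto : ∀ x < μb, f x < μ)
    (hcof : sSup (f '' Set.Iio μb) = μ)
    (hf0 : f 0 = 0)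
    (Λb Λ : Set Ordinal)
    (hΛb : Λb ⊆ Set.Iio μb) (hΛ : Λ ⊆ Set.Iio μ)
    (hi : ∀ y < μb, (y ∈ Λb ↔ f y ∈ Λ))
    (hii : ∀ z y, z < y → y < μb →
      ((∃ x ∈ Λb, z < x ∧ x < y) ↔ (∃ x ∈ Λ, f z < x ∧ x < f y)))
    (hclosed : IsClosedIn Λb μb) :
    ((∃ m, IsGreatest Λb m) ↔ (∃ m, IsGreatest Λ m)) ∧
      ∀ m m', IsGreatest Λb m → IsGreatest Λ m' → f m = m' :=
  stmt3_general μb μ f hmono hcof hf0 Λb Λ hΛb hΛ hi hii hclosed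
end

section
/- Let ν be an ordinal, let ρ < λ ≤ ν be ordinals, and let Λ be a function assigning to each finite sequence of ordinals a subset of ν. Define a finite sequence q_ρ recursively by q_ρ(0) = 0 and q_ρ(k+1) = max(Λ(q_ρ↾(k+1)) ∩ ρ) as long as this maximum exists, the recursion stopping otherwise; define q_λ analogously with λ in place of ρ. If every value of q_λ is < ρ, then q_λ is an initial segment of q_ρ: the length of q_λ is at most the length of q_ρ, and q_λ(k) = q_ρ(k) for every k in the domain of q_λ. -/
/-- `q` (of length `n ∈ ℕ∞`) is the sequence recursively defined from the assignment `F` of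
sets of ordinals to finite sequences of ordinals, by `q 0 = 0` and
`q (k+1) = max (F (q↾(k+1)))` as long as this maximum exists, the recursion stopping
otherwise.  Here `q↾(k+1)` is the list `[q 0, …, q k]`. -/
def IsRecSeq (F : List Ordinal → Set Ordinal) (n : ℕ∞) (q : ℕ → Ordinal) : Prop :=
  0 < n ∧ q 0 = 0 ∧
  ∀ k : ℕ, (k : ℕ∞) < n →
    ((((k + 1 : ℕ) : ℕ∞) < n) ↔ ∃ m, IsGreatest (F ((List.range (k + 1)).map q)) m) ∧
    ((((k + 1 : ℕ) : ℕ∞) < n) → IsGreatest (F ((List.range (k + 1)).map q)) (q (k + 1)))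

theorem stmt6 (ν ρ lam : Ordinal) (hrl : ρ < lam) (hln : lam ≤ ν)
    (Λ : List Ordinal → Set Ordinal)
    (hΛ : ∀ s : List Ordinal, Λ s ⊆ Set.Iio ν)
    (nρ nl : ℕ∞) (qρ ql : ℕ → Ordinal)
    (hqρ : IsRecSeq (fun s => Λ s ∩ Set.Iio ρ) nρ qρ)
    (hql : IsRecSeq (fun s => Λ s ∩ Set.Iio lam) nl ql)
    (hsmall : ∀ k : ℕ, (k : ℕ∞) < nl → ql k < ρ) :
    nl ≤ nρ ∧ ∀ k : ℕ, (k : ℕ∞) < nl → ql k = qρ k := by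
  obtain ⟨h0ρ, hq0ρ, hρ⟩ := hqρ
  obtain ⟨h0l, hq0l, hl⟩ := hql
  have main : ∀ k : ℕ, (k : ℕ∞) < nl → (k : ℕ∞) < nρ ∧ ql k = qρ k := by
    intro k
    induction k using Nat.strong_induction_on with
    | _ k ih =>
      match k with
      | 0 => exact fun _ => ⟨h0ρ, by rw [hq0l, hq0ρ]⟩
      | Nat.succ k =>
        intro hk1
        have hk : (k : ℕ∞) < nl :=
          lt_of_le_of_lt (by exact_mod_cast Nat.le_succ k) hk1
        have hmap : (List.range (k+1)).map ql = (List.range (k+1)).map qρ := by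
          apply List.map_congr_left
          intro i hi
          have hik : i < k + 1 := List.mem_range.mp hi
          have hil : (i : ℕ∞) < nl :=
            lt_of_le_of_lt (by exact_mod_cast Nat.lt_succ_iff.mp hik) hk
          exact (ih i hik hil).2
        have hG := (hl k hk).2 hk1
        have hg : IsGreatest ((fun s => Λ s ∩ Set.Iio ρ) ((List.range (k+1)).map qρ))
            (ql (k+1)) := by
          rw [← hmap]
          refine ⟨⟨hG.1.1, hsmall (k+1) hk1⟩, ?_⟩
          intro x hx
          exact hG.2 ⟨hx.1, lt_trans hx.2 hrl⟩
        obtain ⟨hkρ, _⟩ := ih k (Nat.lt_succ_self k) hk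
        obtain ⟨hiff, himp⟩ := hρ k hkρ
        have hk1ρ : ((k + 1 : ℕ) : ℕ∞) < nρ := hiff.mpr ⟨_, hg⟩
        exact ⟨hk1ρ, hg.unique (himp hk1ρ)⟩
  refine ⟨?_, fun k hk => (main k hk).2⟩
  by_contra h
  push_neg at h
  have hne : nρ ≠ ⊤ := h.ne_top
  lift nρ to ℕ using hne with m
  exact absurd (main m h).1 (lt_irrefl _)
end
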